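/- arXiv:2603.17598 — 2 statements merged into one kernel-verified Lean document; each statement's English description precedes it below -/
import Mathlib

section
/- Let G be a finite tree, P a set of vertices, and a ∈ P a leaf of G (a vertex of degree 1). Then any two vertices of P that are consecutive to a are also consecutive to each other. Consequently, the set consisting of a together with all points of P consecutive to a is a set of pairwise consecutive points, and a belongs to exactly one discrete component of (G,P). -/
/-- `z` lies on the (unique, in a tree) path from `x` to `y`. -/
def OnPath {V : Type*} (G : SimpleGraph V) (x y z : V) : Prop :=
  ∃ p : G.Walk x y, p.IsPath ∧ z ∈ p.support

/-- Two points of `P` are consecutive: no other point of `P` lies on the path between them. -/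
def Consecutive {V : Type*} (G : SimpleGraph V) (P : Set V) (x y : V) : Prop :=
  x ∈ P ∧ y ∈ P ∧ x ≠ y ∧ ∀ z ∈ P, OnPath G x y z → z = x ∨ z = y

/-- A discrete component of the pointed tree `(G, P)`: a maximal subset of `P`
all of whose pairs of distinct points are consecutive. -/
def IsDiscreteComponent {V : Type*} (G : SimpleGraph V) (P : Set V) (C : Set V) : Prop :=
  C.Nonempty ∧ C ⊆ P ∧ (∀ x ∈ C, ∀ y ∈ C, x ≠ y → Consecutive G P x y) ∧
    ∀ D : Set V, C ⊆ D → D ⊆ P →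
      (∀ x ∈ D, ∀ y ∈ D, x ≠ y → Consecutive G P x y) → D = C

open SimpleGraph

/-- A nontrivial walk has a neighbor of its start point in its support. -/
lemma first_step {V : Type*} {G : SimpleGraph V} {u v : V} (w : G.Walk u v) (huv : u ≠ v) :
    ∃ b, G.Adj u b ∧ b ∈ w.support ∧ b ≠ u := by
  cases w with
  | nil => exact absurd rfl huv
  | cons h w' => exact ⟨_, h, by simp, h.ne'⟩

/-- A leaf is not on a path between two other vertices. -/
lemma leaf_not_mem_path {V : Type*} [Fintype V] [DecidableEq V]
    {G : SimpleGraph V} [DecidableRel G.Adj] {a x y : V}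
    (hleaf : G.degree a = 1) {p : G.Walk x y} (hp : p.IsPath)
    (hax : a ≠ x) (hay : a ≠ y) : a ∉ p.support := by
  intro hmem
  set q := p.takeUntil a hmem with hq
  set r := p.dropUntil a hmem with hr
  have hqp : q.IsPath := hp.takeUntil hmem
  have hrp : r.IsPath := hp.dropUntil hmem
  obtain ⟨b₁, hb₁adj, hb₁mem, hb₁ne⟩ := first_step q.reverse hax
  obtain ⟨b₂, hb₂adj, hb₂mem, hb₂ne⟩ := first_step r hay
  have hb₁q : b₁ ∈ q.support := by
    rwa [SimpleGraph.Walk.support_reverse, List.mem_reverse] at hb₁mem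
  -- b₁ ≠ b₂
  have hnd : (q.support ++ r.support.tail).Nodup := by
    rw [← SimpleGraph.Walk.support_append, SimpleGraph.Walk.take_spec p hmem]
    exact hp.support_nodup
  have hb₂tail : b₂ ∈ r.support.tail := by
    have := r.support_eq_cons
    rw [this, List.mem_cons] at hb₂mem
    rcases hb₂mem with h | h
    · exact absurd h hb₂ne
    · exact h
  have hne : b₁ ≠ b₂ := by
    rintro rfl
    exact (List.disjoint_of_nodup_append hnd) hb₁q hb₂tail
  have hsub : ({b₁, b₂} : Finset V) ⊆ G.neighborFinset a := by
    intro c hc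
    rw [SimpleGraph.mem_neighborFinset]
    rcases Finset.mem_insert.mp hc with rfl | hc
    · exact hb₁adj
    · rw [Finset.mem_singleton] at hc; subst hc; exact hb₂adj
  have := Finset.card_le_card hsub
  rw [Finset.card_pair hne, SimpleGraph.card_neighborFinset_eq_degree, hleaf] at this
  omega

/-- In a tree, the path from `x` to `y` lies inside the union of paths `a→x` and `a→y`. -/
lemma path_subset_union {V : Type*} [DecidableEq V] {G : SimpleGraph V} (hG : G.IsTree) {a x y z : V}
    {p : G.Walk x y} (hp : p.IsPath) {q : G.Walk a x} (hq : q.IsPath)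
    {r : G.Walk a y} (hr : r.IsPath) (hz : z ∈ p.support) :
    z ∈ q.support ∨ z ∈ r.support := by
  set w := q.reverse.append r with hw
  have hbp : w.bypass.IsPath := w.bypass_isPath
  have : p = w.bypass := ((hG.existsUnique_path x y).unique hp hbp)
  rw [this] at hz
  have hz' := w.support_bypass_subset hz
  rw [hw, SimpleGraph.Walk.mem_support_append_iff] at hz'
  rcases hz' with h | h
  · left; rwa [SimpleGraph.Walk.support_reverse, List.mem_reverse] at h
  · right; exact h

lemma onPath_symm {V : Type*} {G : SimpleGraph V} {x y z : V} (h : OnPath G x y z) :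
    OnPath G y x z := by
  obtain ⟨p, hp, hz⟩ := h
  exact ⟨p.reverse, hp.reverse, by simpa [SimpleGraph.Walk.support_reverse] using hz⟩

lemma consecutive_symm {V : Type*} {G : SimpleGraph V} {P : Set V} {x y : V}
    (h : Consecutive G P x y) : Consecutive G P y x := by
  obtain ⟨hx, hy, hne, hz⟩ := h
  exact ⟨hy, hx, hne.symm, fun z hzP hop => (hz z hzP (onPath_symm hop)).symm⟩

theorem leaf_consecutive_component {V : Type*} [Fintype V] [DecidableEq V]
    (G : SimpleGraph V) [DecidableRel G.Adj] (hG : G.IsTree)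
    (P : Set V) (a : V) (ha : a ∈ P) (hleaf : G.degree a = 1) :
    (∀ x y : V, Consecutive G P a x → Consecutive G P a y → x ≠ y →
        Consecutive G P x y) ∧
      (∀ x ∈ insert a {x | Consecutive G P a x}, ∀ y ∈ insert a {x | Consecutive G P a x},
        x ≠ y → Consecutive G P x y) ∧
      (∃! C : Set V, IsDiscreteComponent G P C ∧ a ∈ C) := by
  have key : ∀ x y : V, Consecutive G P a x → Consecutive G P a y → x ≠ y →
      Consecutive G P x y := by
    intro x y hx hy hxy
    obtain ⟨-, hxP, hax, hxc⟩ := hx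
    obtain ⟨-, hyP, hay, hyc⟩ := hy
    refine ⟨hxP, hyP, hxy, ?_⟩
    rintro z hzP ⟨p, hp, hzmem⟩
    obtain ⟨wq⟩ := hG.isConnected a x
    obtain ⟨wr⟩ := hG.isConnected a y
    have hza : z ≠ a := by
      rintro rfl
      exact leaf_not_mem_path hleaf hp hax hay hzmem
    rcases path_subset_union hG hp wq.bypass_isPath wr.bypass_isPath hzmem with h | h
    · rcases hxc z hzP ⟨wq.bypass, wq.bypass_isPath, h⟩ with rfl | rfl
      · exact absurd rfl hza
      · exact Or.inl rfl
    · rcases hyc z hzP ⟨wr.bypass, wr.bypass_isPath, h⟩ with rfl | rfl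
      · exact absurd rfl hza
      · exact Or.inr rfl
  have pair : ∀ x ∈ insert a {x | Consecutive G P a x},
      ∀ y ∈ insert a {x | Consecutive G P a x}, x ≠ y → Consecutive G P x y := by
    rintro x hx y hy hxy
    rcases hx with rfl | hx
    · rcases hy with rfl | hy
      · exact absurd rfl hxy
      · exact hy
    · rcases hy with rfl | hy
      · exact consecutive_symm hx
      · exact key x y hx hy hxy
  refine ⟨key, pair, ?_⟩
  set C : Set V := insert a {x | Consecutive G P a x} with hC
  have haC : a ∈ C := Set.mem_insert _ _
  have hCP : C ⊆ P := by
    rintro c (rfl | hc)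
    · exact ha
    · exact hc.2.1
  have hCdc : IsDiscreteComponent G P C := by
    refine ⟨⟨a, haC⟩, hCP, pair, ?_⟩
    intro D hCD hDP hDcons
    apply Set.Subset.antisymm _ hCD
    intro d hd
    by_cases hda : d = a
    · subst hda; exact haC
    · exact Set.mem_insert_of_mem _ (hDcons a (hCD haC) d hd (Ne.symm hda))
  refine ⟨C, ⟨hCdc, haC⟩, ?_⟩
  rintro C' ⟨hC', haC'⟩
  have hsub : C' ⊆ C := by
    intro c hc
    by_cases hca : c = a
    · subst hca; exact haC
    · exact Set.mem_insert_of_mem _ (hC'.2.2.1 a haC' c hc (Ne.symm hca))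
  exact (hC'.2.2.2 C hsub hCP pair).symm
end

section
/- Let G be a finite tree and P a nonempty finite set of vertices of G containing all leaves of G. Let C_1, ..., C_s be the discrete components of (G,P). Then the sum over all discrete components of (|C_j| − 1) equals |P| − 1. -/
namespace TreeAux

open SimpleGraph

variable {V : Type*} [Fintype V] [DecidableEq V] {G : SimpleGraph V}

lemma walk_eq (hG : G.IsTree) {x y : V} {p q : G.Walk x y} (hp : p.IsPath) (hq : q.IsPath) :
    p = q :=
  congrArg Subtype.val (hG.2.path_unique ⟨p, hp⟩ ⟨q, hq⟩)

lemma exists_path (hG : G.IsTree) (x y : V) : ∃ p : G.Walk x y, p.IsPath := by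
  obtain ⟨w⟩ := hG.1.1 x y
  exact ⟨w.bypass, w.bypass_isPath⟩

lemma onPath_symm {x y z : V} (h : OnPath G x y z) : OnPath G y x z := by
  obtain ⟨p, hp, hz⟩ := h
  exact ⟨p.reverse, hp.reverse, by simpa [SimpleGraph.Walk.support_reverse] using hz⟩

lemma onPath_split (hG : G.IsTree) {y z p : V} (x : V) (h : OnPath G y z p) :
    OnPath G y x p ∨ OnPath G x z p := by
  obtain ⟨q, hq⟩ := exists_path hG y x
  obtain ⟨r, hr⟩ := exists_path hG x z
  obtain ⟨w, hw, hpw⟩ := h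
  have hb : (q.append r).bypass.IsPath := SimpleGraph.Walk.bypass_isPath _
  have hwe : w = (q.append r).bypass := walk_eq hG hw hb
  have hmem : p ∈ (q.append r).support :=
    SimpleGraph.Walk.support_bypass_subset _ (hwe ▸ hpw)
  rw [SimpleGraph.Walk.mem_support_append_iff] at hmem
  rcases hmem with h' | h'
  · exact Or.inl ⟨q, hq, h'⟩
  · exact Or.inr ⟨r, hr, h'⟩

lemma path_length_eq_dist (hG : G.IsTree) {x y : V} {p : G.Walk x y} (hp : p.IsPath) :
    p.length = G.dist x y := by
  obtain ⟨q, hq, hql⟩ := hG.1.exists_path_of_dist x y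
  rw [walk_eq hG hp hq, hql]

lemma onPath_dist (hG : G.IsTree) {x y z : V} (h : OnPath G x y z) :
    G.dist x z + G.dist z y = G.dist x y := by
  obtain ⟨p, hp, hz⟩ := h
  have h1 : (p.takeUntil z hz).IsPath := hp.takeUntil hz
  have h2 : (p.dropUntil z hz).IsPath := hp.dropUntil hz
  have hl := congrArg SimpleGraph.Walk.length (p.take_spec hz)
  rw [SimpleGraph.Walk.length_append] at hl
  rw [← path_length_eq_dist hG h1, ← path_length_eq_dist hG h2, hl, path_length_eq_dist hG hp]
set_option linter.unusedSectionVars false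

variable {P : Set V}

/-- `x` is not in the interior of any path between points of `P`. -/
def Extremal (G : SimpleGraph V) (P : Set V) (x : V) : Prop :=
  x ∈ P ∧ ∀ y ∈ P, ∀ z ∈ P, OnPath G y z x → x = y ∨ x = z

lemma exists_extremal (hG : G.IsTree) (hP : P.Nonempty) : ∃ x, Extremal G P x := by
  obtain ⟨p0, hp0⟩ := hP
  obtain ⟨x, hx, hmax⟩ := Set.exists_max_image P (fun v => G.dist p0 v) P.toFinite ⟨p0, hp0⟩
  refine ⟨x, hx, ?_⟩
  intro y hy z hz hop
  by_contra hne
  push_neg at hne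
  rcases onPath_split hG p0 hop with h | h
  · have h' := onPath_dist hG (onPath_symm h)
    have hpos : 0 < G.dist x y := hG.1.pos_dist_of_ne hne.1
    have := hmax y hy
    omega
  · have h' := onPath_dist hG h
    have hpos : 0 < G.dist x z := hG.1.pos_dist_of_ne hne.2
    have := hmax z hz
    omega

lemma consecutive_symm {x y : V} (h : Consecutive G P x y) : Consecutive G P y x :=
  ⟨h.2.1, h.1, h.2.2.1.symm, fun z hz hop => (h.2.2.2 z hz (onPath_symm hop)).symm⟩

lemma exists_consecutive (hG : G.IsTree) {x y : V} (hx : x ∈ P) (hy : y ∈ P) (hxy : x ≠ y) :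
    ∃ y', Consecutive G P x y' := by
  obtain ⟨y', hy', hmin⟩ := Set.exists_min_image (P \ {x}) (fun v => G.dist x v)
    (P \ {x}).toFinite ⟨y, hy, hxy.symm⟩
  refine ⟨y', hx, hy'.1, fun h => hy'.2 h.symm, ?_⟩
  intro z hz hop
  by_contra hne
  push_neg at hne
  have h' := onPath_dist hG hop
  have h1 : 0 < G.dist x z := hG.1.pos_dist_of_ne hne.1.symm
  have h2 : 0 < G.dist z y' := hG.1.pos_dist_of_ne hne.2
  have := hmin z ⟨hz, fun hzx => hne.1 (by exact hzx)⟩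
  omega

/-- helper: points of `P` on the path `[x,w]` when `u` is consecutive to both `x` and `w`. -/
lemma mem3 (hG : G.IsTree) {x w u p : V} (hxu : Consecutive G P x u) (huw : Consecutive G P u w)
    (hp : OnPath G x w p) (hpP : p ∈ P) : p = x ∨ p = u ∨ p = w := by
  rcases onPath_split hG u hp with h | h
  · rcases hxu.2.2.2 p hpP h with h' | h'
    · exact Or.inl h'
    · exact Or.inr (Or.inl h')
  · rcases huw.2.2.2 p hpP h with h' | h'
    · exact Or.inr (Or.inl h')
    · exact Or.inr (Or.inr h')

/-- If `x` is extremal and consecutive to both `y` and `z`, then `y` and `z` are consecutive. -/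
lemma consec_of_consec_extremal (hG : G.IsTree) {x y z : V} (hx : Extremal G P x)
    (hy : Consecutive G P x y) (hz : Consecutive G P x z) (hyz : y ≠ z) :
    Consecutive G P y z := by
  refine ⟨hy.2.1, hz.2.1, hyz, ?_⟩
  intro p hpP hp
  rcases mem3 hG (consecutive_symm hy) hz hp hpP with h | h | h
  · exact Or.inl h
  · subst h
    rcases hx.2 y hy.2.1 z hz.2.1 hp with h | h
    · exact absurd h hy.2.2.1
    · exact absurd h hz.2.2.1
  · exact Or.inr h

/-- If `x,w` are both consecutive to two distinct points `y,z`, they are consecutive. -/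
lemma consec_trans4 (hG : G.IsTree) {x w y z : V} (hyz : y ≠ z) (hxw : x ≠ w)
    (hxy : Consecutive G P x y) (hxz : Consecutive G P x z)
    (hwy : Consecutive G P w y) (hwz : Consecutive G P w z) : Consecutive G P x w := by
  refine ⟨hxy.1, hwy.1, hxw, ?_⟩
  intro p hpP hp
  rcases mem3 hG hxy (consecutive_symm hwy) hp hpP with h1 | h1 | h1
  · exact Or.inl h1
  · rcases mem3 hG hxz (consecutive_symm hwz) hp hpP with h2 | h2 | h2
    · exact Or.inl h2
    · exact absurd (h1 ▸ h2 ▸ rfl : y = z) hyz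
    · exact Or.inr h2
  · exact Or.inr h1

/-- Pairwise consecutive. -/
def PW (G : SimpleGraph V) (P C : Set V) : Prop :=
  ∀ x ∈ C, ∀ y ∈ C, x ≠ y → Consecutive G P x y

lemma isDC_iff {C : Set V} : IsDiscreteComponent G P C ↔
    (C.Nonempty ∧ C ⊆ P ∧ PW G P C ∧ ∀ D : Set V, C ⊆ D → D ⊆ P → PW G P D → D = C) :=
  Iff.rfl

lemma exists_component {C : Set V} (hC : C.Nonempty) (hCP : C ⊆ P) (hpw : PW G P C) :
    ∃ D, IsDiscreteComponent G P D ∧ C ⊆ D := by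
  have hfin : ({D : Set V | C ⊆ D ∧ D ⊆ P ∧ PW G P D}).Finite := Set.toFinite _
  obtain ⟨D, hD, hmax⟩ := Set.Finite.exists_maximalFor id _ hfin ⟨C, subset_rfl, hCP, hpw⟩
  simp only [Set.mem_setOf_eq] at hD
  obtain ⟨hCD, hDP, hDpw⟩ := hD
  refine ⟨D, ⟨hC.mono hCD, hDP, hDpw, ?_⟩, hCD⟩
  intro E hDE hEP hEpw
  exact Set.Subset.antisymm (hmax (j := E) (by exact ⟨hCD.trans hDE, hEP, hEpw⟩) hDE) hDE

lemma comp_unique (hG : G.IsTree) {x : V} (hx : Extremal G P x) {C C' : Set V}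
    (hC : IsDiscreteComponent G P C) (hC' : IsDiscreteComponent G P C')
    (hxC : x ∈ C) (hxC' : x ∈ C') : C = C' := by
  have key : ∀ c ∈ C ∪ C', c ≠ x → Consecutive G P x c := by
    intro c hc hcx
    rcases hc with hc | hc
    · exact hC.2.2.1 x hxC c hc (Ne.symm hcx)
    · exact hC'.2.2.1 x hxC' c hc (Ne.symm hcx)
  have hpw : PW G P (C ∪ C') := by
    intro a ha b hb hab
    by_cases hax : a = x
    · subst hax; exact key b hb (Ne.symm hab)
    · by_cases hbx : b = x
      · subst hbx; exact consecutive_symm (key a ha hax)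
      · exact consec_of_consec_extremal hG hx (key a ha hax) (key b hb hbx) hab
  have h1 := hC.2.2.2 (C ∪ C') Set.subset_union_left
    (Set.union_subset hC.2.1 hC'.2.1) hpw
  have h2 := hC'.2.2.2 (C ∪ C') Set.subset_union_right
    (Set.union_subset hC.2.1 hC'.2.1) hpw
  exact h1.symm.trans h2

lemma mem_comp_of_consec (hG : G.IsTree) {x e : V} (hx : Extremal G P x) {C : Set V}
    (hC : IsDiscreteComponent G P C) (hxC : x ∈ C) (he : Consecutive G P x e) : e ∈ C := by
  have hpw : PW G P {x, e} := by
    intro a ha b hb hab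
    rcases ha with rfl | rfl <;> rcases hb with rfl | rfl
    · exact absurd rfl hab
    · exact he
    · exact consecutive_symm he
    · exact absurd rfl hab
  obtain ⟨D, hD, hsub⟩ := exists_component ⟨x, Or.inl rfl⟩
    (by intro t ht; rcases ht with rfl | rfl; exacts [hx.1, he.2.1]) hpw
  have hCD := comp_unique hG hx hC hD hxC (hsub (Or.inl rfl))
  rw [hCD]
  exact hsub (Or.inr rfl)

/-- Removing an extremal point does not change consecutivity among the remaining points. -/
lemma consec_diff_iff (hG : G.IsTree) {x : V} (hx : Extremal G P x) {y z : V}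
    (hy : y ∈ P \ {x}) (hz : z ∈ P \ {x}) :
    Consecutive G P y z ↔ Consecutive G (P \ {x}) y z := by
  constructor
  · intro h
    exact ⟨hy, hz, h.2.2.1, fun p hp hop => h.2.2.2 p hp.1 hop⟩
  · intro h
    refine ⟨hy.1, hz.1, h.2.2.1, ?_⟩
    intro p hp hop
    by_cases hpx : p = x
    · subst hpx
      rcases hx.2 y hy.1 z hz.1 hop with h' | h'
      · exact absurd h'.symm hy.2
      · exact absurd h'.symm hz.2
    · exact h.2.2.2 p ⟨hp, hpx⟩ hop

lemma pw_diff_iff (hG : G.IsTree) {x : V} (hx : Extremal G P x) {C : Set V}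
    (hC : C ⊆ P \ {x}) : PW G P C ↔ PW G (P \ {x}) C := by
  constructor
  · intro h a ha b hb hab
    exact (consec_diff_iff hG hx (hC ha) (hC hb)).1 (h a ha b hb hab)
  · intro h a ha b hb hab
    exact (consec_diff_iff hG hx (hC ha) (hC hb)).2 (h a ha b hb hab)

lemma comp_singleton (hG : G.IsTree) {x : V} (hx : Extremal G P x) {C0 : Set V}
    (hC0 : IsDiscreteComponent G P C0) (hxC0 : x ∈ C0) (hB : C0 \ {x} = ∅) :
    P = {x} := by
  refine Set.eq_singleton_iff_unique_mem.2 ⟨hx.1, ?_⟩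
  intro y hy
  by_contra hxy
  obtain ⟨y', hy'⟩ := exists_consecutive hG hx.1 hy (fun h => hxy h.symm)
  have hmem : y' ∈ C0 := mem_comp_of_consec hG hx hC0 hxC0 hy'
  have : y' ∈ C0 \ {x} := ⟨hmem, fun h => hy'.2.2.1 h.symm⟩
  rw [hB] at this
  exact this

lemma isDC_singleton_iff {x : V} (hPx : P = {x}) {C : Set V} :
    IsDiscreteComponent G P C ↔ C = {x} := by
  constructor
  · intro h
    exact (Set.Nonempty.subset_singleton_iff h.1).1 (hPx ▸ h.2.1)
  · rintro rfl
    refine ⟨⟨x, rfl⟩, hPx ▸ subset_rfl, ?_, ?_⟩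
    · intro a ha b hb hab
      rw [Set.mem_singleton_iff] at ha hb
      exact absurd (ha.trans hb.symm) hab
    · intro D hxD hDP _
      exact Set.Subset.antisymm (hPx ▸ hDP) hxD

lemma main_aux (hG : G.IsTree) :
    ∀ n (P : Set V), P.ncard ≤ n → P.Nonempty →
      ∀ S : Finset (Set V), (∀ C, C ∈ S ↔ IsDiscreteComponent G P C) →
      ∑ C ∈ S, (C.ncard - 1) = P.ncard - 1 := by
  intro n
  induction n with
  | zero =>
    intro P hle hne S hS
    have := (Set.ncard_pos (P.toFinite)).2 hne
    omega
  | succ n ih =>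
    intro P hle hne S hS
    classical
    obtain ⟨x, hx⟩ := exists_extremal hG hne
    have hpwx : PW G P {x} := by
      intro a ha b hb hab
      rw [Set.mem_singleton_iff] at ha hb
      exact absurd (ha.trans hb.symm) hab
    obtain ⟨C0, hC0, hsub0⟩ :=
      exists_component (Set.singleton_nonempty x) (Set.singleton_subset_iff.2 hx.1) hpwx
    have hxC0 : x ∈ C0 := hsub0 rfl
    by_cases hB0 : C0 \ {x} = ∅
    · have hPx : P = {x} := comp_singleton hG hx hC0 hxC0 hB0
      have hSx : S = {({x} : Set V)} := by
        ext C
        rw [hS, isDC_singleton_iff hPx, Finset.mem_singleton]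
      rw [hSx, hPx]
      simp
    · set P' := P \ {x} with hP'def
      have hBne : (C0 \ {x}).Nonempty := Set.nonempty_iff_ne_empty.2 hB0
      have hBP' : C0 \ {x} ⊆ P' := Set.diff_subset_diff_left hC0.2.1
      have hBpw' : PW G P' (C0 \ {x}) :=
        (pw_diff_iff hG hx hBP').1 (fun a ha b hb hab => hC0.2.2.1 a ha.1 b hb.1 hab)
      obtain ⟨C1, hC1, hBC1⟩ := exists_component hBne hBP' hBpw'
      have hxP' : x ∉ P' := fun h => h.2 rfl
      have hmemC0 : ∀ E ⊆ P, PW G P E → x ∈ E → E ⊆ C0 := by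
        intro E hEP hEpw hxE e he
        by_cases hex : e = x
        · exact hex ▸ hxC0
        · exact mem_comp_of_consec hG hx hC0 hxC0 (hEpw x hxE e he (Ne.symm hex))
      have dir1 : ∀ D, IsDiscreteComponent G P D → x ∉ D → IsDiscreteComponent G P' D := by
        intro D hD hxD
        have hDP' : D ⊆ P' := fun d hd => ⟨hD.2.1 hd, fun h => hxD (h ▸ hd)⟩
        refine ⟨hD.1, hDP', (pw_diff_iff hG hx hDP').1 hD.2.2.1, ?_⟩
        intro E hDE hEP' hEpw
        exact hD.2.2.2 E hDE (hEP'.trans Set.diff_subset) ((pw_diff_iff hG hx hEP').2 hEpw)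
      have dir2 : ∀ D, IsDiscreteComponent G P' D → D ≠ C1 →
          IsDiscreteComponent G P D ∧ x ∉ D := by
        intro D hD hDC1
        have hxD : x ∉ D := fun h => hxP' (hD.2.1 h)
        have hDpwP : PW G P D := (pw_diff_iff hG hx hD.2.1).2 hD.2.2.1
        refine ⟨⟨hD.1, hD.2.1.trans Set.diff_subset, hDpwP, ?_⟩, hxD⟩
        intro E hDE hEP hEpw
        by_cases hxE : x ∈ E
        · exfalso
          have hEC0 : E ⊆ C0 := hmemC0 E hEP hEpw hxE
          have hDB : D ⊆ C0 \ {x} := fun d hd => ⟨hEC0 (hDE hd), fun h => hxD (h ▸ hd)⟩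
          exact hDC1 (hD.2.2.2 C1 (hDB.trans hBC1) hC1.2.1 hC1.2.2.1).symm
        · have hEP' : E ⊆ P' := fun e he => ⟨hEP he, fun h => hxE (h ▸ he)⟩
          exact hD.2.2.2 E hDE hEP' ((pw_diff_iff hG hx hEP').1 hEpw)
      have huniq : ∀ D, IsDiscreteComponent G P D → x ∈ D → D = C0 :=
        fun D hD h => comp_unique hG hx hD hC0 h hxC0
      set S' : Finset (Set V) := insert C1 (S.erase C0) with hS'def
      have hS' : ∀ C, C ∈ S' ↔ IsDiscreteComponent G P' C := by
        intro C
        simp only [hS'def, Finset.mem_insert, Finset.mem_erase]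
        constructor
        · rintro (rfl | ⟨hne', hmem⟩)
          · exact hC1
          · exact dir1 C ((hS C).1 hmem) (fun hxC => hne' (huniq C ((hS C).1 hmem) hxC))
        · intro h
          by_cases hC1eq : C = C1
          · exact Or.inl hC1eq
          · obtain ⟨hDC, hxD⟩ := dir2 C h hC1eq
            exact Or.inr ⟨fun h' => hxD (h' ▸ hxC0), (hS C).2 hDC⟩
      have hP'card : P'.ncard = P.ncard - 1 := Set.ncard_diff_singleton_of_mem hx.1
      have hPpos : 0 < P.ncard := (Set.ncard_pos P.toFinite).2 hne
      have hP'ne : P'.Nonempty := hBne.mono hBP'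
      have hP'pos : 0 < P'.ncard := (Set.ncard_pos P'.toFinite).2 hP'ne
      have ihS' := ih P' (by omega) hP'ne S' hS'
      have hC0S : C0 ∈ S := (hS C0).2 hC0
      have hsumS : (∑ C ∈ S.erase C0, (C.ncard - 1)) + (C0.ncard - 1)
          = ∑ C ∈ S, (C.ncard - 1) := Finset.sum_erase_add S _ hC0S
      have hC0card : C0.ncard = (C0 \ {x}).ncard + 1 := by
        have h1 := Set.ncard_diff_singleton_of_mem hxC0
        have h2 : 0 < C0.ncard := (Set.ncard_pos C0.toFinite).2 ⟨x, hxC0⟩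
        omega
      by_cases hcase : C1 = C0 \ {x}
      · have hC1S : C1 ∉ S.erase C0 := by
          intro hmem
          have h1 := (hS C1).1 (Finset.mem_of_mem_erase hmem)
          have h2 := h1.2.2.2 C0 (hcase ▸ Set.diff_subset) hC0.2.1 hC0.2.2.1
          exact hxP' (hC1.2.1 (h2 ▸ hxC0))
        have hsum' : ∑ C ∈ S', (C.ncard - 1)
            = (C1.ncard - 1) + ∑ C ∈ S.erase C0, (C.ncard - 1) :=
          Finset.sum_insert hC1S
        have hC1pos : 0 < C1.ncard := (Set.ncard_pos C1.toFinite).2 hC1.1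
        have hC1card : C1.ncard + 1 = C0.ncard := by rw [hcase]; omega
        rw [hsum'] at ihS'
        omega
      · have hBss : C0 \ {x} ⊂ C1 := HasSubset.Subset.ssubset_of_ne hBC1
          (fun h => hcase h.symm)
        have hBone : (C0 \ {x}).ncard = 1 := by
          by_contra hne1
          have hBpos : 0 < (C0 \ {x}).ncard := (Set.ncard_pos (Set.toFinite _)).2 hBne
          have h2 : 1 < (C0 \ {x}).ncard := by omega
          obtain ⟨y, hy, z, hz, hyz⟩ := (Set.one_lt_ncard (Set.toFinite _)).1 h2
          obtain ⟨w, hwC1, hwB⟩ := Set.exists_of_ssubset hBss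
          have hwx : w ≠ x := fun h => hxP' (h ▸ hC1.2.1 hwC1)
          have hwy : w ≠ y := fun h => hwB (h ▸ hy)
          have hwz : w ≠ z := fun h => hwB (h ▸ hz)
          have hxy : Consecutive G P x y := hC0.2.2.1 x hxC0 y hy.1 (fun h => hy.2 h.symm)
          have hxz : Consecutive G P x z := hC0.2.2.1 x hxC0 z hz.1 (fun h => hz.2 h.symm)
          have hwyC : Consecutive G P w y :=
            (consec_diff_iff hG hx (hC1.2.1 hwC1) (hBP' hy)).2
              (hC1.2.2.1 w hwC1 y (hBC1 hy) hwy)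
          have hwzC : Consecutive G P w z :=
            (consec_diff_iff hG hx (hC1.2.1 hwC1) (hBP' hz)).2
              (hC1.2.2.1 w hwC1 z (hBC1 hz) hwz)
          have hxw : Consecutive G P x w :=
            consec_trans4 hG hyz (Ne.symm hwx) hxy hxz hwyC hwzC
          have : w ∈ C0 := mem_comp_of_consec hG hx hC0 hxC0 hxw
          exact hwB ⟨this, hwx⟩
        have hC0two : C0.ncard = 2 := by omega
        have hC1comp : IsDiscreteComponent G P C1 := by
          refine ⟨hC1.1, hC1.2.1.trans Set.diff_subset,
            (pw_diff_iff hG hx hC1.2.1).2 hC1.2.2.1, ?_⟩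
          intro E hC1E hEP hEpw
          by_cases hxE : x ∈ E
          · exfalso
            have hEC0 := hmemC0 E hEP hEpw hxE
            have hC1B : C1 ⊆ C0 \ {x} := fun c hc =>
              ⟨hEC0 (hC1E hc), fun h => hxP' (hC1.2.1 (h ▸ hc))⟩
            exact hBss.not_subset hC1B
          · have hEP' : E ⊆ P' := fun e he => ⟨hEP he, fun h => hxE (h ▸ he)⟩
            exact hC1.2.2.2 E hC1E hEP' ((pw_diff_iff hG hx hEP').1 hEpw)
        have hmem : C1 ∈ S.erase C0 := Finset.mem_erase.2
          ⟨fun h => hxP' (hC1.2.1 (h ▸ hxC0)), (hS C1).2 hC1comp⟩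
        have hS'eq : S' = S.erase C0 := Finset.insert_eq_self.2 hmem
        rw [hS'eq] at ihS'
        omega

end TreeAux

theorem sum_over_components {V : Type*} [Fintype V] [DecidableEq V]
    (G : SimpleGraph V) [DecidableRel G.Adj] (hG : G.IsTree)
    (P : Set V) (hP : P.Nonempty) (hleaves : ∀ v : V, G.degree v = 1 → v ∈ P)
    (S : Finset (Set V)) (hS : ∀ C : Set V, C ∈ S ↔ IsDiscreteComponent G P C) :
    ∑ C ∈ S, (C.ncard - 1) = P.ncard - 1 :=
  TreeAux.main_aux hG P.ncard P le_rfl hP S hS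
end
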